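/- Let F be a field, N_1,...,N_n positive integers, and λ_{i,j}^k ∈ F fixed scalars. In the polynomial ring F[Z_{i,k} | 1 ≤ i ≤ n, 1 ≤ k ≤ N_i], let J be the ideal generated by the products Z_{i,j}·L_{i,j}. Set M_i := ∏_{k=0}^{N_i−1} (Z_{i,N_i} − Σ_{j≠i} λ_{i,j}^k Z_{j,N_j}) and L_i := ∏_{k=0}^{N_i−1} L_{i,N_i−k}. Then for every 1 ≤ i ≤ n one has M_1···M_n ≡ (−1)^i · L_1···L_i · M_{i+1}···M_n modulo J. -/

import Mathlib

open MvPolynomial Finset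

/-- The variable `Z_{i, N i}` (top variable of the `i`-th block) in
`F[Z_{i,k} | 1 ≤ i ≤ n, 1 ≤ k ≤ N i]`; the index `⟨i, t⟩` with `t : Fin (N i)`
represents the variable `Z_{i, t+1}`. -/
noncomputable def Ztop {F : Type} [Field F] {n : ℕ} (N : Fin n → ℕ) (hN : ∀ i, 0 < N i)
    (i : Fin n) : MvPolynomial ((i : Fin n) × Fin (N i)) F :=
  X ⟨i, ⟨N i - 1, Nat.sub_lt (hN i) Nat.one_pos⟩⟩

/-- The linear form `L_{i,j}` (at index `p = ⟨i, j-1⟩`):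
`L_{i,N i} = Z_{i,1} + ⋯ + Z_{i,N i - 1} - Z_{i,N i} + ∑_{j ≠ i} λ⁰_{i,j} Z_{j,N j}`,
and for `1 ≤ k ≤ N i - 1`,
`L_{i,k} = Z_{i,1} + ⋯ + Z_{i,k} - ∑_{j ≠ i} (λ^{N i - k}_{i,j} - λ⁰_{i,j}) Z_{j,N j}`. -/
noncomputable def Lform {F : Type} [Field F] {n : ℕ} (N : Fin n → ℕ) (hN : ∀ i, 0 < N i)
    (lam : Fin n → Fin n → ℕ → F) (p : (i : Fin n) × Fin (N i)) :
    MvPolynomial ((i : Fin n) × Fin (N i)) F :=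
  if p.2.val + 1 = N p.1 then
    (∑ t ∈ univ.filter fun t : Fin (N p.1) => t.val + 1 < N p.1, X (⟨p.1, t⟩ : (i : Fin n) × Fin (N i)))
      - X p
      + ∑ j ∈ univ.erase p.1, C (lam p.1 j 0) * Ztop N hN j
  else
    (∑ t ∈ univ.filter fun t : Fin (N p.1) => t.val ≤ p.2.val, X (⟨p.1, t⟩ : (i : Fin n) × Fin (N i)))
      - ∑ j ∈ univ.erase p.1,
          C (lam p.1 j (N p.1 - (p.2.val + 1)) - lam p.1 j 0) * Ztop N hN j

/-! Write `z_i = Z_{i,N_i}` and `c_k = ∑_{j ≠ i} λ^k_{i,j} z_j`, so that `M_i = ∏_k (z_i - c_k)`.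
Three facts about a single block drive the proof:
* `z_i L_i ∈ J`, since `L_{i,N_i}` divides `L_i`;
* `z_i M_i ∈ J`: modulo `J`, `z_i (z_i - c_0) = z_i S_{N_i-1}` with `S_m = Z_{i,1} + ⋯ + Z_{i,m}`,
  and peeling off the factors `z_i - c_k` one by one trades `S_{N_i-1}` for ever shorter partial
  sums, the discarded terms `z_i Z_{i,t} ∏_{1 ≤ k ≤ N_i - t} (z_i - c_k)` lying in `J` by downward
  induction on `t`;
* `M_i + L_i ∈ J + (z_j : j ≠ i)`: there all `c_k` vanish, `M_i ≡ z_i^{N_i}` and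
  `L_i ≡ S_1 ⋯ S_{N_i-1} (S_{N_i-1} - z_i)`, while `Z_{i,m} S_m ≡ 0` forces `S_1 ⋯ S_m ≡ S_m^m` and
  `S_m^{m+1} ≡ 0`, and `z_i S_{N_i-1} ≡ z_i^2`.
Then `M_t` is replaced by `-L_t` for `t = 1, …, i`, one factor at a time: each replacement changes
the product by `(M_t + L_t) r`, where every `z_j` with `j ≠ t` divides a factor `z_j M_j` or
`z_j L_j` of `z_j r`, so that `z_j r ∈ J`. -/

section Abstract

variable {A : Type*} [CommRing A]

theorem mul_pow_eq_pow_succ_of_mul_eq_mul_self {a b : A} (h : a * b = a * a) (k : ℕ) :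
    a * b ^ k = a ^ (k + 1) := by
  induction k with
  | zero => simp
  | succ k ih =>
    rw [pow_succ, ← mul_assoc, ih, pow_succ a (k + 1), pow_succ a k, mul_assoc, mul_assoc, h]

variable {x u : ℕ → A} {w : A} {K : ℕ}

theorem prod_partialSum_eq_pow (hx : ∀ t < K, x t * ∑ l ∈ range (t + 1), x l = 0) :
    ∀ m ≤ K, (∏ t ∈ range m, ∑ l ∈ range (t + 1), x l) = (∑ l ∈ range m, x l) ^ m ∧
      (∑ l ∈ range m, x l) ^ (m + 1) = 0 := by
  intro m hm
  induction m with
  | zero => simp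
  | succ m ih =>
    obtain ⟨ihprod, ihpow⟩ := ih (by omega)
    set S := ∑ l ∈ range m, x l
    have hstep : (S + x m) * S = (S + x m) * (S + x m) := by
      have := hx m (by omega)
      rw [sum_range_succ] at this
      linear_combination -this
    have hpow := mul_pow_eq_pow_succ_of_mul_eq_mul_self hstep
    rw [prod_range_succ, ihprod, sum_range_succ]
    refine ⟨by rw [mul_comm, hpow], ?_⟩
    rw [← hpow, ihpow, mul_zero]

theorem pow_add_prod_partialSum_eq_zero
    (hw : w * (∑ l ∈ range K, x l - w) = 0)
    (hx : ∀ t < K, x t * ∑ l ∈ range (t + 1), x l = 0) :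
    w ^ (K + 1) + (∏ t ∈ range K, ∑ l ∈ range (t + 1), x l) * (∑ l ∈ range K, x l - w) = 0 := by
  obtain ⟨hprod, hpow⟩ := prod_partialSum_eq_pow hx K le_rfl
  have hw' := mul_pow_eq_pow_succ_of_mul_eq_mul_self (a := w) (b := ∑ l ∈ range K, x l)
    (by linear_combination hw) K
  rw [hprod]
  linear_combination hpow - hw'

-- In the application `w = Z_{i,N_i}`, `x t = Z_{i,t+1}` and `u k = Z_{i,N_i} - c_k`: the
-- hypotheses are the generators `Z_{i,N_i} L_{i,N_i}` and `Z_{i,t+1} L_{i,t+1}` of `J`, read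
-- modulo `J`.
theorem mul_mul_prod_range_eq_zero
    (hw : w * (∑ l ∈ range K, x l - u 0) = 0)
    (hx : ∀ t < K, x t * (∑ l ∈ range (t + 1), x l - u 0 + u (K - t)) = 0) :
    ∀ t < K, w * x t * ∏ k ∈ range (K - t), u (k + 1) = 0 := by
  suffices h : ∀ d, ∀ t < K, K - t ≤ d → w * x t * ∏ k ∈ range (K - t), u (k + 1) = 0 from
    fun t ht => h _ t ht le_rfl
  intro d
  induction d with
  | zero => intro t ht hd; omega
  | succ d ih =>
    intro t ht hd
    obtain ⟨e, he⟩ : ∃ e, K - t = e + 1 := ⟨K - t - 1, by omega⟩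
    set P := ∏ k ∈ range e, u (k + 1)
    have hlater : ∀ l ∈ Ico (t + 1) K, w * x l * P = 0 := by
      intro l hl
      rw [mem_Ico] at hl
      obtain ⟨r, hr⟩ : (∏ k ∈ range (K - l), u (k + 1)) ∣ P :=
        prod_dvd_prod_of_subset _ _ _ (range_subset_range.mpr (by omega))
      rw [hr]
      linear_combination r * ih l hl.2 (by omega)
    have hsplit : ∑ l ∈ range K, x l = ∑ l ∈ range (t + 1), x l + ∑ l ∈ Ico (t + 1) K, x l :=
      (sum_range_add_sum_Ico x (by omega)).symm
    have hrest : w * (∑ l ∈ Ico (t + 1) K, x l) * P = 0 := by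
      rw [mul_sum, sum_mul]
      exact sum_eq_zero hlater
    rw [he, prod_range_succ, ← he]
    linear_combination (w * P) * hx t ht - (x t * P) * hw + x t * hrest + (x t * P * w) * hsplit

theorem mul_prod_eq_zero_of_linear_relations
    (hw : w * (∑ l ∈ range K, x l - u 0) = 0)
    (hx : ∀ t < K, x t * (∑ l ∈ range (t + 1), x l - u 0 + u (K - t)) = 0) :
    w * ∏ k ∈ range (K + 1), u k = 0 := by
  have hvar := mul_mul_prod_range_eq_zero hw hx
  have key : ∀ m ≤ K, w * u 0 * ∏ k ∈ range m, u (k + 1)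
      = w * (∑ l ∈ range (K - m), x l) * ∏ k ∈ range m, u (k + 1) := by
    intro m hm
    induction m with
    | zero =>
      simp only [range_zero, prod_empty, mul_one, Nat.sub_zero]
      linear_combination -hw
    | succ m ih =>
      have hK : K - m = K - (m + 1) + 1 := by omega
      have hlast := hvar (K - (m + 1)) (by omega)
      rw [show K - (K - (m + 1)) = m + 1 by omega] at hlast
      have hS : ∑ l ∈ range (K - m), x l = ∑ l ∈ range (K - (m + 1)), x l + x (K - (m + 1)) := by
        rw [hK, sum_range_succ]
      rw [prod_range_succ] at hlast ⊢
      linear_combination u (m + 1) * ih (by omega)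
        + (w * (∏ k ∈ range m, u (k + 1)) * u (m + 1)) * hS + hlast
  have hfull := key K le_rfl
  rw [Nat.sub_self, sum_range_zero, mul_zero, zero_mul] at hfull
  rw [prod_range_succ']
  linear_combination hfull

end Abstract

section Telescoping

variable {R ι : Type*} [CommRing R] [Fintype ι] [DecidableEq ι] {J : Ideal R} {a b z : ι → R}

theorem mul_mem_of_mem_sup_span {S : Set R} {r x : R} (hS : ∀ y ∈ S, y * r ∈ J)
    (hx : x ∈ J ⊔ Ideal.span S) : x * r ∈ J := by
  have hle : J ⊔ Ideal.span S ≤ J.colon {r} :=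
    sup_le Ideal.le_colon
      (Ideal.span_le.mpr fun y hy => Submodule.mem_colon_singleton.mpr (hS y hy))
  exact Submodule.mem_colon_singleton.mp (hle hx)

theorem prod_sub_prod_mul_prod_compl_mem (ha : ∀ t, z t * a t ∈ J) (hb : ∀ t, z t * b t ∈ J)
    (hab : ∀ t, a t - b t ∈ J ⊔ Ideal.span (z '' {j | j ≠ t})) (s : Finset ι) :
    ∏ t, a t - (∏ t ∈ s, b t) * ∏ t ∈ sᶜ, a t ∈ J := by
  induction s using Finset.induction_on with
  | empty => simp
  | insert t s ht ih =>
    set r := (∏ j ∈ s, b j) * ∏ j ∈ sᶜ.erase t, a j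
    have hr : ∀ y ∈ z '' {j | j ≠ t}, y * r ∈ J := by
      rintro _ ⟨j, hj, rfl⟩
      by_cases hjs : j ∈ s
      · exact J.mem_of_dvd (mul_dvd_mul_left _ (dvd_mul_of_dvd_left (dvd_prod_of_mem b hjs) _))
          (hb j)
      · refine J.mem_of_dvd (mul_dvd_mul_left _ (dvd_mul_of_dvd_right
          (dvd_prod_of_mem a ?_) _)) (ha j)
        exact mem_erase.mpr ⟨hj, mem_compl.mpr hjs⟩
    have hsplit : ∏ j ∈ sᶜ, a j = a t * ∏ j ∈ sᶜ.erase t, a j :=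
      (mul_prod_erase _ _ (by simpa using ht)).symm
    have hstep := mul_mem_of_mem_sup_span hr (hab t)
    rw [prod_insert ht, compl_insert]
    convert add_mem ih hstep using 1
    rw [hsplit]
    ring

end Telescoping

section Blocks

variable {F : Type} [Field F] {n : ℕ} (N : Fin n → ℕ) (hN : ∀ i, 0 < N i)
  (lam : Fin n → Fin n → ℕ → F)

-- `blockVar N i l` is `Z_{i,l+1}`, extended by `0` for `l ≥ N i` so that partial sums range
-- over `ℕ`.
noncomputable def blockVar (i : Fin n) (l : ℕ) : MvPolynomial ((i : Fin n) × Fin (N i)) F :=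
  if h : l < N i then X ⟨i, ⟨l, h⟩⟩ else 0

noncomputable def blockFactor (i : Fin n) (k : ℕ) : MvPolynomial ((i : Fin n) × Fin (N i)) F :=
  Ztop N hN i - ∑ j ∈ univ.erase i, C (lam i j k) * Ztop N hN j

noncomputable def blockSum (i : Fin n) (m : ℕ) : MvPolynomial ((i : Fin n) × Fin (N i)) F :=
  ∑ l ∈ range m, blockVar N i l

noncomputable def lformIdeal : Ideal (MvPolynomial ((i : Fin n) × Fin (N i)) F) :=
  Ideal.span (Set.range fun p => X p * Lform N hN lam p)

noncomputable def blockM (i : Fin n) : MvPolynomial ((i : Fin n) × Fin (N i)) F :=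
  ∏ k ∈ range (N i), blockFactor N hN lam i k

noncomputable def blockL (i : Fin n) : MvPolynomial ((i : Fin n) × Fin (N i)) F :=
  ∏ k : Fin (N i), Lform N hN lam ⟨i, k⟩

theorem sum_X_filter_eq_sum_blockVar (i : Fin n) {m : ℕ} (hm : m ≤ N i)
    (q : Fin (N i) → Prop) [DecidablePred q] (hq : ∀ t, q t ↔ t.val < m) :
    ∑ t ∈ univ.filter q, (X ⟨i, t⟩ : MvPolynomial ((i : Fin n) × Fin (N i)) F)
      = blockSum N i m := by
  refine sum_bij (fun t _ => t.val) ?_ (fun t _ s _ h => Fin.ext h) ?_ ?_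
  · intro t ht
    simpa [hq] using ht
  · intro l hl
    exact ⟨⟨l, by rw [mem_range] at hl; omega⟩, by simpa [hq] using hl, rfl⟩
  · intro t _
    simp [blockVar]

theorem Lform_top (i : Fin n) :
    Lform N hN lam ⟨i, ⟨N i - 1, Nat.sub_lt (hN i) Nat.one_pos⟩⟩
      = blockSum N i (N i - 1) - blockFactor N hN lam i 0 := by
  rw [Lform, if_pos (Nat.sub_add_cancel (hN i)),
    sum_X_filter_eq_sum_blockVar N i (m := N i - 1) (Nat.sub_le _ _) _
      (fun t => by simp only; omega), blockFactor]
  unfold Ztop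
  ring

theorem Lform_of_succ_lt (i : Fin n) {t : ℕ} (ht : t + 1 < N i) :
    Lform N hN lam ⟨i, ⟨t, by omega⟩⟩
      = blockSum N i (t + 1) - blockFactor N hN lam i 0
        + blockFactor N hN lam i (N i - 1 - t) := by
  rw [Lform, if_neg (by simp only; omega),
    sum_X_filter_eq_sum_blockVar N i ht.le _ (fun s => by simp only; omega), blockFactor,
    blockFactor, Nat.sub_sub, add_comm 1 t]
  simp only [map_sub, sub_mul, sum_sub_distrib]
  ring

theorem blockL_eq (i : Fin n) :
    blockL N hN lam i
      = (∏ t ∈ range (N i - 1),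
          (blockSum N i (t + 1) - blockFactor N hN lam i 0 + blockFactor N hN lam i (N i - 1 - t)))
        * (blockSum N i (N i - 1) - blockFactor N hN lam i 0) := by
  set φ : ℕ → MvPolynomial ((i : Fin n) × Fin (N i)) F := fun t =>
    if t + 1 < N i then
      blockSum N i (t + 1) - blockFactor N hN lam i 0 + blockFactor N hN lam i (N i - 1 - t)
    else blockSum N i (N i - 1) - blockFactor N hN lam i 0
  have hφ : ∀ k : Fin (N i), Lform N hN lam ⟨i, k⟩ = φ k := by
    intro k
    simp only [φ]
    split_ifs with hk
    · exact Lform_of_succ_lt N hN lam i hk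
    · obtain rfl : k = ⟨N i - 1, Nat.sub_lt (hN i) Nat.one_pos⟩ :=
        Fin.ext (by have := k.isLt; simp only; omega)
      exact Lform_top N hN lam i
  rw [blockL, prod_congr rfl fun k _ => hφ k, Fin.prod_univ_eq_prod_range φ,
    ← Nat.sub_add_cancel (hN i), prod_range_succ, Nat.sub_add_cancel (hN i)]
  congr 1
  · exact prod_congr rfl fun t ht => if_pos (by rw [mem_range] at ht; omega)
  · exact if_neg (by omega)

theorem X_mul_Lform_mem (p : (i : Fin n) × Fin (N i)) :
    X p * Lform N hN lam p ∈ lformIdeal N hN lam :=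
  Ideal.subset_span ⟨p, rfl⟩

theorem Ztop_mul_Lform_top_mem (i : Fin n) :
    Ztop N hN i * (blockSum N i (N i - 1) - blockFactor N hN lam i 0) ∈ lformIdeal N hN lam := by
  rw [← Lform_top]
  exact X_mul_Lform_mem N hN lam _

theorem blockVar_mul_Lform_mem (i : Fin n) {t : ℕ} (ht : t + 1 < N i) :
    blockVar N i t * (blockSum N i (t + 1) - blockFactor N hN lam i 0
      + blockFactor N hN lam i (N i - 1 - t)) ∈ lformIdeal N hN lam := by
  rw [← Lform_of_succ_lt N hN lam i ht, blockVar, dif_pos (by omega)]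
  exact X_mul_Lform_mem N hN lam _

theorem Ztop_mul_blockM_mem (i : Fin n) :
    Ztop N hN i * blockM N hN lam i ∈ lformIdeal N hN lam := by
  have hw := Ideal.Quotient.eq_zero_iff_mem.mpr (Ztop_mul_Lform_top_mem N hN lam i)
  have hx : ∀ t < N i - 1, _ := fun t ht =>
    Ideal.Quotient.eq_zero_iff_mem.mpr (blockVar_mul_Lform_mem N hN lam i (t := t) (by omega))
  simp only [blockSum, map_mul, map_sub, map_add, map_sum] at hw hx
  rw [← Ideal.Quotient.eq_zero_iff_mem, blockM, ← Nat.sub_add_cancel (hN i), map_mul, map_prod]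
  exact mul_prod_eq_zero_of_linear_relations hw hx

theorem Ztop_mul_blockL_mem (i : Fin n) :
    Ztop N hN i * blockL N hN lam i ∈ lformIdeal N hN lam := by
  let top : Fin (N i) := ⟨N i - 1, Nat.sub_lt (hN i) Nat.one_pos⟩
  have hdvd : Lform N hN lam ⟨i, top⟩ ∣ blockL N hN lam i :=
    dvd_prod_of_mem (fun k => Lform N hN lam ⟨i, k⟩) (mem_univ top)
  exact (lformIdeal N hN lam).mem_of_dvd (mul_dvd_mul_left _ hdvd) (X_mul_Lform_mem N hN lam _)

theorem blockM_add_blockL_mem (i : Fin n) :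
    blockM N hN lam i + blockL N hN lam i
      ∈ lformIdeal N hN lam ⊔ Ideal.span (Ztop N hN '' {j | j ≠ i}) := by
  set I := lformIdeal N hN lam ⊔ Ideal.span (Ztop N hN '' {j | j ≠ i})
  have hJI : lformIdeal N hN lam ≤ I := le_sup_left
  have hu : ∀ k,
      Ideal.Quotient.mk I (blockFactor N hN lam i k) = Ideal.Quotient.mk I (Ztop N hN i) := by
    intro k
    rw [blockFactor, map_sub, sub_eq_self, map_sum]
    refine sum_eq_zero fun j hj => ?_
    rw [map_mul, Ideal.Quotient.eq_zero_iff_mem.mpr (Ideal.mem_sup_right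
      (Ideal.subset_span (Set.mem_image_of_mem _ (mem_erase.mp hj).1))), mul_zero]
  have hw := Ideal.Quotient.eq_zero_iff_mem.mpr (hJI (Ztop_mul_Lform_top_mem N hN lam i))
  have hx : ∀ t < N i - 1, _ := fun t ht => Ideal.Quotient.eq_zero_iff_mem.mpr
    (hJI (blockVar_mul_Lform_mem N hN lam i (t := t) (by omega)))
  simp only [blockSum, map_mul, map_sub, map_add, map_sum, hu, sub_add_cancel] at hw hx
  rw [← Ideal.Quotient.eq_zero_iff_mem, map_add, blockL_eq, blockM]
  simp only [blockSum, map_mul, map_sub, map_add, map_sum, map_prod, hu, sub_add_cancel,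
    prod_const, card_range]
  rw [← Nat.sub_add_cancel (hN i)]
  exact pow_add_prod_partialSum_eq_zero hw hx

end Blocks

/-- With `M i = ∏_{k=0}^{N i - 1} (Z_{i,N i} - ∑_{j ≠ i} λᵏ_{i,j} Z_{j,N j})` and
`L_i = ∏_{k=0}^{N i - 1} L_{i, N i - k}` (the product of all `L_{i,j}`,
`1 ≤ j ≤ N i`), for every `1 ≤ i ≤ n` (here `i : Fin n` represents `i+1`) one has
`M_1 ⋯ M_n ≡ (-1)ⁱ · L_1 ⋯ L_i · M_{i+1} ⋯ M_n` modulo `J = ⟨Z_{i,j} · L_{i,j}⟩`. -/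
theorem stmt11 (F : Type) [Field F] (n : ℕ) (N : Fin n → ℕ) (hN : ∀ i, 0 < N i)
    (lam : Fin n → Fin n → ℕ → F) :
    ∀ i : Fin n,
      (∏ t : Fin n, ∏ k ∈ Finset.range (N t),
          (Ztop N hN t - ∑ j ∈ univ.erase t, C (lam t j k) * Ztop N hN j))
        - (-1 : MvPolynomial ((i : Fin n) × Fin (N i)) F) ^ (i.val + 1) *
            (∏ t ∈ univ.filter fun t : Fin n => t ≤ i,
              ∏ k : Fin (N t), Lform N hN lam ⟨t, k⟩) *
            (∏ t ∈ univ.filter fun t : Fin n => i < t,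
              ∏ k ∈ Finset.range (N t),
                (Ztop N hN t - ∑ j ∈ univ.erase t, C (lam t j k) * Ztop N hN j)) ∈
      Ideal.span (Set.range fun p : (i : Fin n) × Fin (N i) =>
        X p * Lform N hN lam p) := by
  intro i
  have h := prod_sub_prod_mul_prod_compl_mem
    (a := blockM N hN lam) (b := fun t => -blockL N hN lam t)
    (Ztop_mul_blockM_mem N hN lam)
    (fun t => by rw [mul_neg]; exact neg_mem (Ztop_mul_blockL_mem N hN lam t))
    (fun t => by rw [sub_neg_eq_add]; exact blockM_add_blockL_mem N hN lam t)
    (univ.filter fun t : Fin n => t ≤ i)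
  have hcard : #(univ.filter fun t : Fin n => t ≤ i) = i.val + 1 := by
    rw [filter_ge_eq_Iic, Fin.card_Iic]
  have hcompl : (univ.filter fun t : Fin n => t ≤ i)ᶜ = univ.filter fun t => i < t := by
    ext t
    simp
  rwa [prod_neg, hcard, hcompl] at h
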